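/- Suppose n is even and s ∈ {0,1}ⁿ consists of two copies of a primitive string s′ of length n/2 having an odd number of 1's. Then Ξ(s) is primitive, and writing Ξ(s) = (b₁,…,bₙ) one has b_{n/2+i} = ι(b_i) for all 1 ≤ i ≤ n/2; in particular, ι(Ξ(s)) is the cyclic shift of Ξ(s) by n/2. -/

import Mathlib

open Finset

namespace Necklaces

variable {n : ℕ}

/-- The cyclic left shift `L` on binary strings of length `n`. -/
def shiftL (s : Fin n → Bool) : Fin n → Bool :=
  fun i => s ⟨(i.val + 1) % n, Nat.mod_lt _ (Nat.lt_of_le_of_lt (Nat.zero_le _) i.isLt)⟩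

/-- Digitwise inversion (complement) `ι`. -/
def inv (s : Fin n → Bool) : Fin n → Bool := fun i => !(s i)

/-- A string is primitive if no nontrivial cyclic shift fixes it. -/
def Primitive (s : Fin n → Bool) : Prop :=
  ∀ k : ℕ, 0 < k → k < n → shiftL^[k] s ≠ s

/-- The necklace `⟨s⟩`: the orbit of `s` under cyclic shifts. -/
def necklace (s : Fin n → Bool) : Set (Fin n → Bool) :=
  {t | ∃ k : ℕ, t = shiftL^[k] s}

/-- The necklace inversion class `[s]`: the orbit of `s` under cyclic shifts and inversion. -/
def invClass (s : Fin n → Bool) : Set (Fin n → Bool) :=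
  {t | ∃ k : ℕ, t = shiftL^[k] s ∨ t = inv (shiftL^[k] s)}

/-- The number of 1's in `s`. -/
def onesCard (s : Fin n → Bool) : ℕ := (univ.filter (fun i => s i = true)).card

/-- The mod-2 partial sum map `Ξ`: the `i`-th digit of `Ξ(s)` is `s₁+⋯+sᵢ (mod 2)`. -/
def xi (s : Fin n → Bool) : Fin n → Bool :=
  fun i => decide (Odd ((Finset.Iic i).filter (fun j => s j = true)).card)

/-- `ι(s)` is a cyclic shift of `s`. -/
def ReflexiveStr (s : Fin n → Bool) : Prop := ∃ k : ℕ, shiftL^[k] s = inv s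

/-- `s` consists of two copies of a primitive string of length `n/2`
with an odd number of 1's. -/
def TwoCopies (s : Fin n → Bool) : Prop :=
  n % 2 = 0 ∧ shiftL^[n / 2] s = s ∧ (∀ k : ℕ, 0 < k → k < n / 2 → shiftL^[k] s ≠ s) ∧
    Odd ((univ.filter (fun i : Fin n => i.val < n / 2 ∧ s i = true)).card)

/-- `s` generates a necklace belonging to `Ñ⁺(n)`. -/
def GoodPlus (s : Fin n → Bool) : Prop :=
  (Primitive s ∧ Even (onesCard s)) ∨ TwoCopies s

/-- The set `Ñ⁺(n)` of necklaces. -/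
def NtildePlus (n : ℕ) : Set (Set (Fin n → Bool)) :=
  {N | ∃ s : Fin n → Bool, GoodPlus s ∧ N = necklace s}

/-- The set `N̄(n)` of necklace inversion classes of primitive strings. -/
def Nbar (n : ℕ) : Set (Set (Fin n → Bool)) :=
  {C | ∃ s : Fin n → Bool, Primitive s ∧ C = invClass s}

/-- Lexicographic order on strings, with `0 < 1` and the leftmost digit most significant. -/
def strLt (s t : Fin n → Bool) : Prop :=
  ∃ i : Fin n, (∀ j : Fin n, j < i → s j = t j) ∧ s i < t i

/-- Extended lexicographic order on extended strings `s^b`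
(`b = false` encodes `−`, `b = true` encodes `+`). -/
def extLt (p q : (Fin n → Bool) × Bool) : Prop :=
  strLt p.1 q.1 ∨ (p.1 = q.1 ∧ p.2 < q.2)

/-- The twisted shift operator `F`. -/
def twistF (s : Fin n → Bool) : Fin n → Bool :=
  if h : 0 < n then
    (if shiftL s ⟨0, h⟩ = true then shiftL s else inv (shiftL s))
  else s

/-- The extended twisted shift operator `F̃`. -/
def extF (p : (Fin n → Bool) × Bool) : (Fin n → Bool) × Bool :=
  if h : 0 < n then
    (if twistF p.1 ⟨n - 1, Nat.sub_lt h Nat.one_pos⟩ = true then (twistF p.1, p.2)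
     else (twistF p.1, !p.2))
  else p

/-- Cyclic successor on `Fin n`. -/
def finSucc (i : Fin n) : Fin n :=
  ⟨(i.val + 1) % n, Nat.mod_lt _ (Nat.lt_of_le_of_lt (Nat.zero_le _) i.isLt)⟩

open scoped Classical in
/-- The (0-based) lexicographic rank of `μ i` among `μ₁,…,μₙ`:
the number of indices `j` with `μ j` strictly smaller than `μ i`. -/
noncomputable def rankOf {X : Type*} (lt : X → X → Prop) (μ : Fin n → X) (i : Fin n) : ℕ :=
  (univ.filter (fun j => lt (μ j) (μ i))).card

/-- `σ` is the cyclic permutation `(r₁ r₂ ⋯ rₙ)` built from the ranks `rᵢ` of `μᵢ`: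
`σ(rᵢ) = r_{i+1}` (indices mod `n`). -/
def BuiltFrom {X : Type*} (lt : X → X → Prop) (μ : Fin n → X) (σ : Equiv.Perm (Fin n)) : Prop :=
  ∀ i j : Fin n, rankOf lt μ i = j.val → (σ j).val = rankOf lt μ (finSucc i)

/-- `σ` consists of a single `n`-cycle. -/
def IsCyclicPerm (σ : Equiv.Perm (Fin n)) : Prop :=
  ∀ x y : Fin n, ∃ k : ℕ, (σ ^ k) x = y

/-- `σ` is unimodal: decreasing on an initial segment, then increasing. -/
def IsUnimodal (σ : Equiv.Perm (Fin n)) : Prop :=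
  ∃ m : Fin n, (∀ i j : Fin n, i ≤ j → j ≤ m → σ j ≤ σ i) ∧
    (∀ i j : Fin n, m ≤ i → i ≤ j → σ i ≤ σ j)

/-- Cyclic unimodal permutations. -/
def CUPperm (σ : Equiv.Perm (Fin n)) : Prop := IsCyclicPerm σ ∧ IsUnimodal σ

/-- The string `A(σ)` obtained from the itinerary of `σ` (`+ ↦ 0`, `− ↦ 1`),
with the last digit chosen so that the total number of 1's is even.
(Here `m = σ⁻¹ 0` is the unique element with `σ m` least.) -/
def Astr [NeZero n] (σ : Equiv.Perm (Fin n)) : Fin n → Bool :=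
  fun i =>
    if i.val + 1 < n then decide ((σ ^ (i.val + 1)) (σ⁻¹ 0) < σ⁻¹ 0)
    else decide (Odd ((univ.filter (fun j : Fin n =>
      j.val + 1 < n ∧ (σ ^ (j.val + 1)) (σ⁻¹ 0) < σ⁻¹ 0)).card))

/-- The string used for `Ψ(σ)`: itinerary digits with the last digit chosen
so that the total number of 1's is odd. -/
def BstrOdd [NeZero n] (σ : Equiv.Perm (Fin n)) : Fin n → Bool :=
  fun i =>
    if i.val + 1 < n then decide ((σ ^ (i.val + 1)) (σ⁻¹ 0) < σ⁻¹ 0)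
    else !(decide (Odd ((univ.filter (fun j : Fin n =>
      j.val + 1 < n ∧ (σ ^ (j.val + 1)) (σ⁻¹ 0) < σ⁻¹ 0)).card)))

/-- The itinerary of a cyclic unimodal permutation: `none` encodes `⋆` (position `n`),
`some true` encodes `−` (i.e. `σⁱ(m) < m`), `some false` encodes `+` (i.e. `σⁱ(m) > m`). -/
def itin [NeZero n] (σ : Equiv.Perm (Fin n)) : Fin n → Option Bool :=
  fun i =>
    if i.val + 1 = n then none
    else some (decide ((σ ^ (i.val + 1)) (σ⁻¹ 0) < σ⁻¹ 0))

/-- `σ` arises from the class `C` by the construction defining `λ`: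
for some representative `t` of `C` beginning with `1`, `σ` is the cyclic permutation
built from the lexicographic ranks of the iterates of `t` under `F` (non-reflexive case)
or of `t^−` under `F̃` (reflexive case). -/
def LamRel [NeZero n] (C : Set (Fin n → Bool)) (σ : Equiv.Perm (Fin n)) : Prop :=
  ∃ t : Fin n → Bool, t 0 = true ∧ C = invClass t ∧
    ((¬ ReflexiveStr t ∧ BuiltFrom strLt (fun i : Fin n => twistF^[i.val] t) σ) ∨
     (ReflexiveStr t ∧ BuiltFrom extLt (fun i : Fin n => extF^[i.val] (t, false)) σ))

/-- `σ` arises from the representative `s` by the Weiss–Rogers construction `Φ`: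
`σ` is the cyclic permutation built from the lexicographic ranks of
`νᵢ = ι(Ξ(L^{i-1}(s)))`. -/
def PhiBuilt (s : Fin n → Bool) (σ : Equiv.Perm (Fin n)) : Prop :=
  BuiltFrom strLt (fun i : Fin n => inv (xi (shiftL^[i.val] s))) σ

end Necklaces

/-!
Writing `P(m)` for the parity of the number of 1's among the first `m` digits of the periodic
extension of `s` to `ℕ`, the digits of `Ξ(s)` are `P(1), …, P(n)` and `s` is recovered as
`s_m = P(m + 1) xor P(m)`. If `s` has period `n/2` with an odd number of 1's per period, then
`P(m + n/2) = ¬ P(m)`, which gives the complementation `L^{n/2}(Ξ(s)) = ι(Ξ(s))`. A shift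
`L^k` fixing `Ξ(s)` shifts `P`, hence fixes `s`; the primitivity of the half `s′` leaves only
`k = n/2`, which complements `Ξ(s)` instead of fixing it.
-/

namespace Necklaces

open Function

def prefixParity (f : ℕ → Bool) (m : ℕ) : Bool := Nat.bodd (Nat.count (fun j => f j) m)

lemma decide_odd_eq_bodd (k : ℕ) : decide (Odd k) = Nat.bodd k := by
  cases h : Nat.bodd k <;> simp [Nat.odd_iff, Nat.mod_two_of_bodd, h]

section PrefixParity

variable {f : ℕ → Bool}

lemma prefixParity_succ (m : ℕ) : prefixParity f (m + 1) = xor (prefixParity f m) (f m) := by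
  cases h : f m <;> simp [prefixParity, Nat.count_succ, h]

lemma prefixParity_add_of_periodic {c : ℕ} (hf : Periodic f c) (m : ℕ) :
    prefixParity f (m + c) = xor (prefixParity f m) (prefixParity f c) := by
  have hcount : Nat.count (fun j => f j) (m + c) =
      Nat.count (fun j => f j) m + Nat.count (fun j => f j) c := by
    rw [Nat.count_add']
    simp only [show ∀ j, f (j + c) = f j from hf]
  simp only [prefixParity, hcount, Nat.bodd_add]

lemma prefixParity_add_eq_not {c : ℕ} (hf : Periodic f c) (hc : prefixParity f c = true)
    (m : ℕ) : prefixParity f (m + c) = !prefixParity f m := by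
  rw [prefixParity_add_of_periodic hf, hc, Bool.xor_true]

lemma periodic_of_periodic_prefixParity {k : ℕ} (h : Periodic (prefixParity f) k) :
    Periodic f k := by
  have hdiff : ∀ j, f j = xor (prefixParity f (j + 1)) (prefixParity f j) := fun j => by
    rw [prefixParity_succ, Bool.xor_comm, ← Bool.xor_assoc, Bool.xor_self, Bool.false_xor]
  intro m
  rw [hdiff, hdiff m, add_right_comm, h, h]

end PrefixParity

lemma _root_.Function.Periodic.of_periodic_comp_add_one {α : Type*} {g : ℕ → α} {n k : ℕ}
    (hg : Periodic g n) (hn : 0 < n) (h : Periodic (fun m => g (m + 1)) k) : Periodic g k := by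
  intro m
  have := h (m + n - 1)
  dsimp only at this
  rwa [add_right_comm, Nat.sub_add_cancel (by omega), add_right_comm, hg, hg] at this

section Strings

open scoped Fin.NatCast

variable {n : ℕ} [NeZero n]

def natExt (s : Fin n → Bool) (m : ℕ) : Bool := s (m : Fin n)

@[simp] lemma natExt_val (s : Fin n → Bool) (i : Fin n) : natExt s i = s i := by
  simp [natExt]

lemma shiftL_iterate_apply (s : Fin n → Bool) (k : ℕ) (i : Fin n) :
    shiftL^[k] s i = s (i + (k : Fin n)) := by
  induction k generalizing i with
  | zero => simp
  | succ k ih =>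
    have hsucc : (⟨(i.val + 1) % n, Nat.mod_lt _ i.pos⟩ : Fin n) = i + 1 :=
      Fin.ext (by simp [Fin.val_add])
    rw [iterate_succ_apply', shiftL, ih, hsucc, Nat.cast_succ, add_assoc, add_comm 1]

lemma apply_add_eq_shiftL_iterate_apply (s : Fin n → Bool) {j k : ℕ} (h : j + k < n) :
    s ⟨j + k, h⟩ = shiftL^[k] s ⟨j, by omega⟩ := by
  rw [shiftL_iterate_apply]
  congr 1
  ext
  simp [Fin.val_add, Nat.mod_eq_of_lt (show k < n by omega), Nat.mod_eq_of_lt h]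

lemma shiftL_iterate_eq_iff {s t : Fin n → Bool} {k : ℕ} :
    shiftL^[k] s = t ↔ ∀ m : ℕ, natExt s (m + k) = natExt t m := by
  constructor
  · rintro rfl m
    simp [natExt, shiftL_iterate_apply]
  · intro h
    funext i
    simpa [natExt, shiftL_iterate_apply] using h i

lemma count_natExt {s : Fin n → Bool} {m : ℕ} (hm : m ≤ n) :
    Nat.count (fun j => natExt s j) m = #{i : Fin n | i.val < m ∧ s i = true} := by
  rw [Nat.count_eq_card_filter_range]
  symm
  refine Finset.card_bij (fun i _ => i.val) ?_ (fun i _ j _ h => Fin.ext h) ?_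
  · intro i hi
    simpa using hi
  · intro x hx
    simp only [mem_filter, mem_range] at hx
    have hxn : x < n := by omega
    exact ⟨⟨x, hxn⟩, by simpa [← natExt_val] using hx, rfl⟩

lemma xi_apply (s : Fin n → Bool) (i : Fin n) :
    xi s i = prefixParity (natExt s) (i + 1) := by
  have hIic : (Iic i).filter (fun j => s j = true) =
      univ.filter (fun j : Fin n => j.val < i.val + 1 ∧ s j = true) := by
    refine Finset.ext fun j => ?_
    simp only [mem_filter, mem_Iic, mem_univ, true_and, Fin.le_def, Nat.lt_succ_iff]
  rw [xi, hIic, ← count_natExt (by omega), decide_odd_eq_bodd, prefixParity]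

lemma natExt_xi {s : Fin n → Bool} (h : Periodic (prefixParity (natExt s)) n) (m : ℕ) :
    natExt (xi s) m = prefixParity (natExt s) (m + 1) := by
  rw [natExt, xi_apply, Fin.val_natCast]
  exact (h.add_const 1).map_mod_nat m

lemma shiftL_iterate_xi_eq_inv {s : Fin n → Bool} {p : ℕ}
    (h : Periodic (prefixParity (natExt s)) n)
    (hanti : ∀ m, prefixParity (natExt s) (m + p) = !prefixParity (natExt s) m) :
    shiftL^[p] (xi s) = inv (xi s) := by
  rw [shiftL_iterate_eq_iff]
  intro m
  rw [natExt_xi h, add_right_comm, hanti]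
  exact congrArg (!·) (natExt_xi h m).symm

lemma shiftL_iterate_eq_self_of_xi {s : Fin n → Bool} {k : ℕ}
    (h : Periodic (prefixParity (natExt s)) n) (hk : shiftL^[k] (xi s) = xi s) :
    shiftL^[k] s = s := by
  rw [shiftL_iterate_eq_iff] at hk ⊢
  refine periodic_of_periodic_prefixParity (h.of_periodic_comp_add_one (NeZero.pos n) ?_)
  intro m
  simpa [natExt_xi h, add_right_comm] using hk m

end Strings

/-- Suppose `n` is even and `s ∈ {0,1}ⁿ` consists of two copies of a
primitive string of length `n/2` with an odd number of 1's. Then `Ξ(s)` is primitive,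
its digit at position `n/2 + i` is the complement of its digit at position `i`
(for `1 ≤ i ≤ n/2`), and `ι(Ξ(s))` is the cyclic shift of `Ξ(s)` by `n/2`. -/
theorem xi_of_two_copies (n : ℕ) (s : Fin n → Bool)
    (hev : n % 2 = 0)
    (hper : shiftL^[n / 2] s = s)
    (hhalfprim : ∀ k : ℕ, 0 < k → k < n / 2 → shiftL^[k] s ≠ s)
    (hodd : Odd ((Finset.univ.filter (fun i : Fin n => i.val < n / 2 ∧ s i = true)).card)) :
    Primitive (xi s) ∧
    (∀ (j : ℕ) (hj : j < n / 2),
      xi s ⟨j + n / 2, by omega⟩ = !(xi s ⟨j, by omega⟩)) ∧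
    shiftL^[n / 2] (xi s) = inv (xi s) := by
  have hhalf_pos : 0 < n / 2 := by
    obtain ⟨i, hi⟩ := Finset.card_pos.mp hodd.pos
    have := (mem_filter.mp hi).2.1
    omega
  have : NeZero n := ⟨by omega⟩
  have hanti : ∀ m, prefixParity (natExt s) (m + n / 2) = !prefixParity (natExt s) m := by
    refine prefixParity_add_eq_not (shiftL_iterate_eq_iff.mp hper) ?_
    rw [prefixParity, count_natExt (Nat.div_le_self n 2), ← decide_odd_eq_bodd]
    exact decide_eq_true hodd
  have hperiodic : Periodic (prefixParity (natExt s)) n := fun m => by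
    rw [show m + n = m + n / 2 + n / 2 by omega, hanti, hanti, Bool.not_not]
  have hinv : shiftL^[n / 2] (xi s) = inv (xi s) := shiftL_iterate_xi_eq_inv hperiodic hanti
  refine ⟨fun k hk0 hkn hk => ?_,
    fun j hj => (apply_add_eq_shiftL_iterate_apply _ _).trans (congrFun hinv _), hinv⟩
  have hks : IsPeriodicPt shiftL k s := shiftL_iterate_eq_self_of_xi hperiodic hk
  rcases lt_trichotomy k (n / 2) with hlt | rfl | hgt
  · exact hhalfprim k hk0 hlt hks
  · exact Bool.not_ne_self _ (congrFun (hinv.symm.trans hk) 0)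
  · exact hhalfprim (k - n / 2) (by omega) (by omega) (hks.sub hper)

end Necklaces
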